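/- arXiv:1812.00533 — 3 statements merged into one kernel-verified Lean document; each statement's English description precedes it below -/
import Mathlib

section
/- (Foata–Schützenberger) Every Ferrers board is rook equivalent to a unique Ferrers board with strictly increasing column heights; that is, for every Ferrers board B there is exactly one sequence 0 < c_1 < c_2 < ⋯ < c_k of strictly increasing positive integers such that the Ferrers board with column heights (c_1,…,c_k) is rook equivalent to B. -/
/-- A (non-attacking) rook placement on the board with column heights `b`:
a set of cells (column, row) inside the board, no two sharing a column or a row.
Cells are 0-indexed: cell `(i, j)` lies in the board iff `j < b i`. -/
def IsRookPlacement {n : ℕ} (b : Fin n → ℕ) (P : Finset (Fin n × ℕ)) : Prop :=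
  (∀ c ∈ P, c.2 < b c.1) ∧
  ∀ c ∈ P, ∀ d ∈ P, c ≠ d → c.1 ≠ d.1 ∧ c.2 ≠ d.2

/-- The `k`-th rook number of the board `b`: the number of placements of `k`
non-attacking rooks on `b`. -/
noncomputable def rookNum {n : ℕ} (b : Fin n → ℕ) (k : ℕ) : ℕ :=
  Set.ncard {P : Finset (Fin n × ℕ) | IsRookPlacement b P ∧ P.card = k}

/-- Two boards are rook equivalent if all their rook numbers agree. -/
def RookEquiv {n₁ n₂ : ℕ} (b₁ : Fin n₁ → ℕ) (b₂ : Fin n₂ → ℕ) : Prop :=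
  ∀ k, rookNum b₁ k = rookNum b₂ k

/-- The root vector of a board: the (0-indexed) `i`-th entry is `i - b i`
(1-indexed: `(i-1) - b_i`). -/
def rootVec {n : ℕ} (b : Fin n → ℕ) : Fin n → ℤ := fun i => (i : ℤ) - (b i : ℤ)

/-- `b₁` is obtained from `b₂` by moving `k > 0` squares out of one column into a
single other column: the boards agree except in columns `i` and `j`, where `b₁`
has `k` more squares in column `i` and `k` fewer in column `j`. -/
def MovesSquares {n : ℕ} (b₁ b₂ : Fin n → ℕ) : Prop :=
  ∃ (i j : Fin n) (k : ℕ), i ≠ j ∧ 0 < k ∧ b₁ i = b₂ i + k ∧ b₂ j = b₁ j + k ∧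
    ∀ l, l ≠ i → l ≠ j → b₁ l = b₂ l

/-- A Ferrers board with `n` columns: a weakly increasing sequence of column heights. -/
def FerrersBoard (n : ℕ) : Type := {b : Fin n → ℕ // Monotone b}

/-- The rook equivalence graph of the equivalence class of `B`: vertices are the
Ferrers boards with `n` columns rook equivalent to `B`; two distinct boards are
adjacent when one is obtained from the other by moving squares out of one column
into a single other column. -/
def rookEquivGraph {n : ℕ} (B : FerrersBoard n) :
    SimpleGraph {C : FerrersBoard n // RookEquiv C.1 B.1} :=
  SimpleGraph.fromRel fun C D => MovesSquares C.1.1 D.1.1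

/-- `entryCount b k` is `v_k`, the number of entries of the root vector of `b`
equal to `k`. -/
def entryCount {n : ℕ} (b : Fin n → ℕ) (k : ℕ) : ℕ :=
  (Finset.univ.filter fun l => rootVec b l = (k : ℤ)).card

/-!
By the Goldman–Joichi–White factorization, a Ferrers board `b` with `n` columns satisfies
`∑ₖ r_k(b) (x)_{n-k} = ∏ᵢ (x - (i - bᵢ))`, proved by peeling off the tallest column. Falling
factorials are linearly independent, so two Ferrers boards with the same number of columns are
rook equivalent iff their root vectors agree as multisets.

Along a Ferrers board the root `i - bᵢ` starts at a non-positive value and rises by at most one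
per column, so if `m` is the least natural number exceeding every root, each of `0, …, m - 1` is a
root. Removing them and listing the remaining roots as `w₀ ≥ w₁ ≥ ⋯` (all `< m`) gives the board
`cⱼ = j + m - wⱼ`, which is strictly increasing and positive; after prepending `m` empty columns it
has the same roots as `b`. Conversely, a strictly increasing positive board with `k` columns has
`r_k ≠ 0 = r_{k+1}`, which pins down `k`, and its roots `j - cⱼ` are weakly decreasing, so they
are determined by their multiset.
-/

open Finset

section Placements

variable {n : ℕ}

open Classical in
noncomputable def placements (b : Fin n → ℕ) (k : ℕ) : Finset (Finset (Fin n × ℕ)) :=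
  {P ∈ (univ ×ˢ range (univ.sup b)).powerset | IsRookPlacement b P ∧ P.card = k}

theorem mem_placements {b : Fin n → ℕ} {k : ℕ} {P : Finset (Fin n × ℕ)} :
    P ∈ placements b k ↔ IsRookPlacement b P ∧ P.card = k := by
  simp only [placements, mem_filter, mem_powerset, and_iff_right_iff_imp]
  rintro ⟨hP, -⟩ c hc
  exact mem_product.2 ⟨mem_univ _, mem_range.2 ((hP.1 c hc).trans_le (le_sup (mem_univ _)))⟩

theorem rookNum_eq_card_placements (b : Fin n → ℕ) (k : ℕ) : rookNum b k = #(placements b k) := by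
  rw [rookNum, ← Set.ncard_coe_finset]
  congr 1
  ext P
  simp [mem_placements]

theorem IsRookPlacement.injOn_fst {b : Fin n → ℕ} {P : Finset (Fin n × ℕ)}
    (hP : IsRookPlacement b P) : Set.InjOn Prod.fst (P : Set (Fin n × ℕ)) :=
  fun c hc d hd hcd => by_contra fun hne => (hP.2 c hc d hd hne).1 hcd

theorem IsRookPlacement.injOn_snd {b : Fin n → ℕ} {P : Finset (Fin n × ℕ)}
    (hP : IsRookPlacement b P) : Set.InjOn Prod.snd (P : Set (Fin n × ℕ)) :=
  fun c hc d hd hcd => by_contra fun hne => (hP.2 c hc d hd hne).2 hcd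

theorem IsRookPlacement.card_le {b : Fin n → ℕ} {P : Finset (Fin n × ℕ)}
    (hP : IsRookPlacement b P) : P.card ≤ n := by
  classical
  calc P.card = #(P.image Prod.fst) := (card_image_of_injOn hP.injOn_fst).symm
    _ ≤ n := card_le_univ _ |>.trans_eq (Fintype.card_fin n)

theorem rookNum_zero (b : Fin n → ℕ) : rookNum b 0 = 1 := by
  rw [rookNum_eq_card_placements, card_eq_one]
  refine ⟨∅, eq_singleton_iff_unique_mem.2 ⟨mem_placements.2 ⟨⟨by simp, by simp⟩, rfl⟩, ?_⟩⟩
  exact fun P hP => card_eq_zero.1 (mem_placements.1 hP).2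

theorem rookNum_eq_zero_of_lt (b : Fin n → ℕ) {k : ℕ} (hk : n < k) : rookNum b k = 0 := by
  rw [rookNum_eq_card_placements, card_eq_zero, eq_empty_iff_forall_notMem]
  intro P hP
  obtain ⟨hrook, rfl⟩ := mem_placements.1 hP
  exact hk.not_ge hrook.card_le

theorem rookNum_self_ne_zero {b : Fin n → ℕ} (hb : ∀ i : Fin n, (i : ℕ) < b i) :
    rookNum b n ≠ 0 := by
  classical
  have hinj : Function.Injective fun i : Fin n => (i, (i : ℕ)) := fun i j h => (Prod.mk.inj h).1
  rw [rookNum_eq_card_placements, ← pos_iff_ne_zero, card_pos]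
  refine ⟨univ.image fun i => (i, (i : ℕ)), mem_placements.2 ⟨⟨?_, ?_⟩, ?_⟩⟩
  · simpa using hb
  · simp only [mem_image, mem_univ, true_and]
    rintro _ ⟨i, rfl⟩ _ ⟨j, rfl⟩ hij
    exact ⟨fun h => hij (by simp_all), fun h => hij (by simp_all [Fin.ext_iff])⟩
  · rw [card_image_of_injective _ hinj, card_univ, Fintype.card_fin]

end Placements

section Reindexing

variable {m n : ℕ}

theorem isRookPlacement_map_iff (φ : Fin m ↪ Fin n) (b : Fin n → ℕ) (Q : Finset (Fin m × ℕ)) :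
    IsRookPlacement b (Q.map (φ.prodMap (.refl ℕ))) ↔ IsRookPlacement (b ∘ φ) Q := by
  simp only [IsRookPlacement, mem_map, forall_exists_index, and_imp, forall_apply_eq_imp_iff₂]
  simp [Function.Embedding.prodMap]

theorem card_placements_comp (φ : Fin m ↪ Fin n) (b : Fin n → ℕ) (k : ℕ) :
    #(placements (b ∘ φ) k) = #{P ∈ placements b k | ∀ c ∈ P, c.1 ∈ Set.range φ} := by
  set e := φ.prodMap (.refl ℕ)
  have map_preimage : ∀ P : Finset (Fin n × ℕ), (∀ c ∈ P, c.1 ∈ Set.range φ) →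
      (P.preimage e e.injective.injOn).map e = P := by
    intro P hP
    ext c
    simp only [mem_map, mem_preimage]
    refine ⟨by rintro ⟨d, hd, rfl⟩; exact hd, fun hc => ?_⟩
    obtain ⟨i, hi⟩ := hP c hc
    exact ⟨(i, c.2), by rwa [show e (i, c.2) = c from Prod.ext hi rfl], Prod.ext hi rfl⟩
  refine card_nbij' (·.map e) (·.preimage e e.injective.injOn) ?_ ?_
    (fun Q _ => preimage_map e Q) (fun P hP => map_preimage P (mem_filter.1 hP).2)
  · intro Q hQ
    obtain ⟨hrook, hcard⟩ := mem_placements.1 hQ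
    refine mem_filter.2 ⟨mem_placements.2 ⟨(isRookPlacement_map_iff φ b Q).2 hrook, ?_⟩, ?_⟩
    · rw [card_map, hcard]
    · simp only [mem_map]
      rintro _ ⟨d, -, rfl⟩
      exact ⟨d.1, rfl⟩
  · intro P hP
    obtain ⟨hmem, hrange⟩ := mem_filter.1 hP
    rw [← map_preimage P hrange, mem_placements, isRookPlacement_map_iff, card_map] at hmem
    exact mem_placements.2 hmem

theorem rookNum_comp_of_eq_zero (φ : Fin m ↪ Fin n) {b : Fin n → ℕ}
    (hb : ∀ i, i ∉ Set.range φ → b i = 0) (k : ℕ) : rookNum (b ∘ φ) k = rookNum b k := by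
  rw [rookNum_eq_card_placements, rookNum_eq_card_placements, card_placements_comp,
    filter_true_of_mem]
  intro P hP c hc
  by_contra h
  simpa [hb _ h] using (mem_placements.1 hP).1.1 c hc

theorem rookNum_append_zero (c : Fin n → ℕ) (k : ℕ) :
    rookNum (Fin.append (0 : Fin m → ℕ) c) k = rookNum c k := by
  rw [← rookNum_comp_of_eq_zero (Fin.natAddEmb m)]
  · congr 1
    funext j
    exact Fin.append_right _ _ j
  · intro i hi
    induction i using Fin.addCases with
    | left i => exact Fin.append_left _ _ i
    | right j => exact absurd ⟨j, rfl⟩ hi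

end Reindexing

section LastColumn

variable {n : ℕ}

theorem IsRookPlacement.mono {b : Fin n → ℕ} {P Q : Finset (Fin n × ℕ)}
    (hQ : IsRookPlacement b Q) (hPQ : P ⊆ Q) : IsRookPlacement b P :=
  ⟨fun c hc => hQ.1 c (hPQ hc), fun c hc d hd => hQ.2 c (hPQ hc) d (hPQ hd)⟩

theorem IsRookPlacement.insert {b : Fin n → ℕ} {P : Finset (Fin n × ℕ)} {c : Fin n × ℕ}
    (hP : IsRookPlacement b P) (hc : c.2 < b c.1) (hcP : ∀ d ∈ P, d.1 ≠ c.1 ∧ d.2 ≠ c.2) :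
    IsRookPlacement b (insert c P) := by
  refine ⟨fun d hd => ?_, fun d hd d' hd' hne => ?_⟩
  · rcases mem_insert.1 hd with rfl | hd
    exacts [hc, hP.1 d hd]
  · rcases mem_insert.1 hd with rfl | hdP <;> rcases mem_insert.1 hd' with rfl | hd'P
    · exact absurd rfl hne
    · exact (hcP d' hd'P).imp Ne.symm Ne.symm
    · exact hcP d hdP
    · exact hP.2 d hdP d' hd'P hne

theorem card_placements_avoiding_last (b : Fin (n + 1) → ℕ) (k : ℕ) :
    #{P ∈ placements b k | ∀ c ∈ P, c.1 ≠ Fin.last n} = rookNum (b ∘ Fin.castSucc) k := by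
  rw [rookNum_eq_card_placements, ← Fin.coe_castSuccEmb, card_placements_comp]
  congr 1
  refine filter_congr fun P _ => forall₂_congr fun c _ => ?_
  exact Fin.exists_castSucc_eq.symm

theorem card_placements_meeting_last (b : Fin (n + 1) → ℕ) (k : ℕ) :
    #{P ∈ placements b (k + 1) | ∃ c ∈ P, c.1 = Fin.last n} =
      ∑ P ∈ placements b k with ∀ c ∈ P, c.1 ≠ Fin.last n,
        #(range (b (Fin.last n)) \ P.image Prod.snd) := by
  rw [← card_sigma]
  symm
  refine card_bij (fun x _ => insert (Fin.last n, x.2) x.1) ?_ ?_ ?_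
  · rintro ⟨P, r⟩ hx
    simp only [mem_sigma, mem_filter, mem_placements, mem_sdiff, mem_range, mem_image,
      not_exists, not_and] at hx
    obtain ⟨⟨⟨hP, hcard⟩, hlast⟩, hr, hrow⟩ := hx
    have hnotMem : (Fin.last n, r) ∉ P := fun h => hlast _ h rfl
    refine mem_filter.2 ⟨mem_placements.2 ⟨?_, ?_⟩, ⟨_, mem_insert_self _ _, rfl⟩⟩
    · exact hP.insert hr fun d hd => ⟨hlast d hd, hrow d hd⟩
    · rw [card_insert_of_notMem hnotMem, hcard]
  · rintro ⟨P₁, r₁⟩ h₁ ⟨P₂, r₂⟩ h₂ heq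
    have hlast₁ := (mem_filter.1 (mem_sigma.1 h₁).1).2
    have hlast₂ := (mem_filter.1 (mem_sigma.1 h₂).1).2
    have hr : r₁ = r₂ := by
      have : (Fin.last n, r₁) ∈ insert (Fin.last n, r₂) P₂ := heq ▸ mem_insert_self _ _
      rcases mem_insert.1 this with h | h
      exacts [(Prod.ext_iff.1 h).2, absurd rfl (hlast₂ _ h)]
    subst hr
    have hnotMem₁ : (Fin.last n, r₁) ∉ P₁ := fun h => hlast₁ _ h rfl
    have hnotMem₂ : (Fin.last n, r₁) ∉ P₂ := fun h => hlast₂ _ h rfl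
    have hP : P₁ = P₂ := by
      simpa [erase_insert hnotMem₁, erase_insert hnotMem₂] using
        congrArg (erase · (Fin.last n, r₁)) heq
    rw [hP]
  · intro Q hmem
    obtain ⟨hmem, c, hc, hcL⟩ := mem_filter.1 hmem
    obtain ⟨hQ, hcard⟩ := mem_placements.1 hmem
    have hother : ∀ d ∈ Q.erase c, d.1 ≠ c.1 ∧ d.2 ≠ c.2 := fun d hd =>
      hQ.2 d (mem_of_mem_erase hd) c hc (ne_of_mem_erase hd)
    refine ⟨⟨Q.erase c, c.2⟩, mem_sigma.2 ⟨mem_filter.2 ⟨mem_placements.2 ⟨?_, ?_⟩, ?_⟩, ?_⟩, ?_⟩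
    · exact hQ.mono (erase_subset c Q)
    · rw [card_erase_of_mem hc, hcard, Nat.add_sub_cancel]
    · exact fun d hd => hcL ▸ (hother d hd).1
    · simp only [mem_sdiff, mem_range, mem_image, not_exists, not_and]
      exact ⟨hcL ▸ hQ.1 c hc, fun d hd => (hother d hd).2⟩
    · rw [← hcL, insert_erase hc]

theorem IsRookPlacement.card_sdiff_rows_add_card {b : Fin n → ℕ} {P : Finset (Fin n × ℕ)}
    (hP : IsRookPlacement b P) {β : ℕ} (hβ : ∀ i, b i ≤ β) :
    #(range β \ P.image Prod.snd) + #P = β := by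
  have hrows : P.image Prod.snd ⊆ range β := by
    simp only [image_subset_iff, mem_range]
    exact fun c hc => (hP.1 c hc).trans_le (hβ c.1)
  rw [← card_image_of_injOn hP.injOn_snd, card_sdiff_add_card_eq_card hrows, card_range]

theorem rookNum_succ_eq {b : Fin (n + 1) → ℕ} (hb : ∀ i, b i ≤ b (Fin.last n)) (k : ℕ) :
    (rookNum b (k + 1) : ℤ) = rookNum (b ∘ Fin.castSucc) (k + 1) +
      ((b (Fin.last n) : ℤ) - k) * rookNum (b ∘ Fin.castSucc) k := by
  rw [rookNum_eq_card_placements b (k + 1),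
    ← card_filter_add_card_filter_not (fun P => ∀ c ∈ P, c.1 ≠ Fin.last n)]
  simp only [not_forall, not_not, exists_prop]
  rw [card_placements_meeting_last, card_placements_avoiding_last,
    ← card_placements_avoiding_last b k]
  push_cast
  rw [sum_congr rfl (g := fun _ => (b (Fin.last n) : ℤ) - k), sum_const, nsmul_eq_mul, mul_comm]
  intro P hP
  obtain ⟨hrook, hcard⟩ := mem_placements.1 (mem_filter.1 hP).1
  have := hrook.card_sdiff_rows_add_card hb
  omega

end LastColumn

section Factorization

open Polynomial

theorem sum_antidiagonal_smul_descPochhammer_succ {r s : ℕ → ℤ} {n : ℕ} (β : ℤ) (hr : r 0 = 1)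
    (hs : s 0 = 1) (hsn : s (n + 1) = 0) (hrec : ∀ k, r (k + 1) = s (k + 1) + (β - k) * s k) :
    ∑ p ∈ antidiagonal (n + 1), r p.1 • descPochhammer ℤ p.2 =
      (∑ p ∈ antidiagonal n, s p.1 • descPochhammer ℤ p.2) * (X - C ((n : ℤ) - β)) := by
  have hshift : descPochhammer ℤ (n + 1) + ∑ p ∈ antidiagonal n, s (p.1 + 1) • descPochhammer ℤ p.2
      = ∑ p ∈ antidiagonal n, s p.1 • descPochhammer ℤ (p.2 + 1) := by
    have h₁ := Nat.sum_antidiagonal_succ (f := fun p => s p.1 • descPochhammer ℤ p.2) (n := n)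
    have h₂ := Nat.sum_antidiagonal_succ' (f := fun p => s p.1 • descPochhammer ℤ p.2) (n := n)
    simp only [hs, hsn, one_smul, zero_smul, zero_add] at h₁ h₂
    rw [← h₁, h₂]
  have hfactor : ∀ p ∈ antidiagonal n, s p.1 • descPochhammer ℤ p.2 * (X - C ((n : ℤ) - β)) =
      s p.1 • descPochhammer ℤ (p.2 + 1) + ((β - p.1) * s p.1) • descPochhammer ℤ p.2 := by
    intro p hp
    rw [HasAntidiagonal.mem_antidiagonal] at hp
    rw [descPochhammer_succ_right, ← hp]
    simp only [smul_eq_C_mul, map_sub, map_mul, map_add, map_natCast, Nat.cast_add]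
    ring
  rw [Nat.sum_antidiagonal_succ, hr, one_smul, sum_mul, sum_congr rfl hfactor, sum_add_distrib,
    ← hshift, add_assoc, ← sum_add_distrib]
  simp only [hrec, add_smul]

theorem sum_antidiagonal_rookNum_smul_descPochhammer {n : ℕ} {b : Fin n → ℕ} (hb : Monotone b) :
    ∑ p ∈ antidiagonal n, (rookNum b p.1 : ℤ) • descPochhammer ℤ p.2 =
      ∏ i, (X - C (rootVec b i)) := by
  induction n with
  | zero => simp [rookNum_zero]
  | succ n ih =>
    have hlast : rootVec b (Fin.last n) = n - b (Fin.last n) := by simp [rootVec]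
    rw [sum_antidiagonal_smul_descPochhammer_succ (r := fun k => (rookNum b k : ℤ))
      (s := fun k => (rookNum (b ∘ Fin.castSucc) k : ℤ)) (b (Fin.last n))
      (by simp [rookNum_zero]) (by simp [rookNum_zero]) (by simp [rookNum_eq_zero_of_lt])
      (rookNum_succ_eq fun i => hb (Fin.le_last i)),
      ih (hb.comp Fin.strictMono_castSucc.monotone), Fin.prod_univ_castSucc, hlast]
    rfl

end Factorization

section RootMultiset

open Polynomial

def rootMultiset {n : ℕ} (b : Fin n → ℕ) : Multiset ℤ := univ.val.map (rootVec b)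

theorem card_rootMultiset {n : ℕ} (b : Fin n → ℕ) : Multiset.card (rootMultiset b) = n := by
  simp [rootMultiset]

theorem prod_X_sub_C_rootVec {n : ℕ} (b : Fin n → ℕ) :
    ∏ i, (X - C (rootVec b i)) = ((rootMultiset b).map fun a => X - C a).prod := by
  rw [prod_eq_multiset_prod, rootMultiset, Multiset.map_map]
  rfl

theorem roots_prod_X_sub_C_rootVec {n : ℕ} (b : Fin n → ℕ) :
    (∏ i, (X - C (rootVec b i))).roots = rootMultiset b := by
  rw [prod_X_sub_C_rootVec, roots_multiset_prod_X_sub_C]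

theorem linearIndependent_descPochhammer : LinearIndependent ℤ (descPochhammer ℤ) :=
  Polynomial.Sequence.linearIndependent ⟨descPochhammer ℤ, fun i => by
    rw [degree_eq_natDegree (monic_descPochhammer ℤ i).ne_zero, descPochhammer_natDegree]⟩

theorem eq_of_sum_antidiagonal_smul_descPochhammer_eq {f g : ℕ → ℤ} {n : ℕ}
    (h : ∑ p ∈ antidiagonal n, f p.1 • descPochhammer ℤ p.2 =
      ∑ p ∈ antidiagonal n, g p.1 • descPochhammer ℤ p.2) {k : ℕ} (hk : k ≤ n) : f k = g k := by
  have hzero : ∑ j ∈ range (n + 1), (f (n - j) - g (n - j)) • descPochhammer ℤ j = 0 := by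
    have reflect : ∀ F : ℕ → ℤ, ∑ p ∈ antidiagonal n, F p.1 • descPochhammer ℤ p.2 =
        ∑ j ∈ range (n + 1), F (n - j) • descPochhammer ℤ j := fun F => by
      rw [← Nat.sum_antidiagonal_swap]
      exact Nat.sum_antidiagonal_eq_sum_range_succ (fun j k => F k • descPochhammer ℤ j) n
    simp only [sub_smul, sum_sub_distrib, ← reflect, h, sub_self]
  have := linearIndependent_iff'.1 linearIndependent_descPochhammer _ _ hzero (n - k)
    (mem_range.2 (by omega))
  rwa [Nat.sub_sub_self hk, sub_eq_zero] at this

theorem rootMultiset_eq_of_rookEquiv {n : ℕ} {b₁ b₂ : Fin n → ℕ} (h₁ : Monotone b₁)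
    (h₂ : Monotone b₂) (h : RookEquiv b₁ b₂) : rootMultiset b₁ = rootMultiset b₂ := by
  rw [← roots_prod_X_sub_C_rootVec, ← roots_prod_X_sub_C_rootVec,
    ← sum_antidiagonal_rookNum_smul_descPochhammer h₁,
    ← sum_antidiagonal_rookNum_smul_descPochhammer h₂]
  simp only [h _]

theorem rookEquiv_of_rootMultiset_eq {n₁ n₂ : ℕ} {b₁ : Fin n₁ → ℕ} {b₂ : Fin n₂ → ℕ}
    (h₁ : Monotone b₁) (h₂ : Monotone b₂) (h : rootMultiset b₁ = rootMultiset b₂) :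
    RookEquiv b₁ b₂ := by
  obtain rfl : n₁ = n₂ := by rw [← card_rootMultiset b₁, h, card_rootMultiset]
  intro k
  rcases le_or_gt k n₁ with hk | hk
  · refine Int.ofNat_inj.1 (eq_of_sum_antidiagonal_smul_descPochhammer_eq
      (f := fun k => (rookNum b₁ k : ℤ)) (g := fun k => (rookNum b₂ k : ℤ)) ?_ hk)
    rw [sum_antidiagonal_rookNum_smul_descPochhammer h₁,
      sum_antidiagonal_rookNum_smul_descPochhammer h₂, prod_X_sub_C_rootVec,
      prod_X_sub_C_rootVec, h]
  · rw [rookNum_eq_zero_of_lt b₁ hk, rookNum_eq_zero_of_lt b₂ hk]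

end RootMultiset

theorem Antitone.eq_of_map_univ_eq {α : Type*} [LinearOrder α] {k : ℕ} {f g : Fin k → α}
    (hf : Antitone f) (hg : Antitone g) (h : univ.val.map f = univ.val.map g) : f = g := by
  rw [Fin.univ_val_map, Fin.univ_val_map, Multiset.coe_eq_coe] at h
  exact List.ofFn_injective <|
    h.eq_of_sortedGE (List.sortedGE_ofFn_iff.2 hf) (List.sortedGE_ofFn_iff.2 hg)

theorem Multiset.exists_antitone_map_univ_eq {α : Type*} [LinearOrder α] (s : Multiset α) :
    ∃ k, ∃ f : Fin k → α, Antitone f ∧ univ.val.map f = s := by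
  refine ⟨_, (s.sort (· ≥ ·)).get, ?_, ?_⟩
  · exact List.sortedGE_iff_pairwise.2 (s.pairwise_sort _)
  · rw [Fin.univ_val_map, List.ofFn_get, Multiset.sort_eq]

section StrictBoards

variable {k : ℕ}

theorem StrictMono.antitone_rootVec {c : Fin k → ℕ} (hc : StrictMono c) :
    Antitone (rootVec c) := by
  cases k with
  | zero => exact fun i => i.elim0
  | succ k =>
    refine Fin.antitone_iff_succ_le.2 fun i => ?_
    have := hc i.castSucc_lt_succ
    simp only [rootVec, Fin.val_succ, Fin.val_castSucc]
    omega

theorem StrictMono.lt_apply_of_pos {c : Fin k → ℕ} (hc : StrictMono c) (hpos : ∀ i, 0 < c i)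
    (j : Fin k) : (j : ℕ) < c j := by
  have := hc.antitone_rootVec (Fin.le_def.2 (Nat.zero_le j) : (⟨0, j.pos⟩ : Fin k) ≤ j)
  have := hpos ⟨0, j.pos⟩
  simp only [rootVec] at *
  omega

theorem sigma_eq_of_rookEquiv {k₁ k₂ : ℕ} {c₁ : Fin k₁ → ℕ} {c₂ : Fin k₂ → ℕ}
    (hc₁ : StrictMono c₁) (hpos₁ : ∀ i, 0 < c₁ i) (hc₂ : StrictMono c₂) (hpos₂ : ∀ i, 0 < c₂ i)
    (h : RookEquiv c₁ c₂) : (⟨k₁, c₁⟩ : (k : ℕ) × (Fin k → ℕ)) = ⟨k₂, c₂⟩ := by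
  obtain rfl : k₁ = k₂ := by
    refine le_antisymm (not_lt.1 fun hlt => ?_) (not_lt.1 fun hlt => ?_)
    · exact rookNum_self_ne_zero (hc₁.lt_apply_of_pos hpos₁)
        (by rw [h, rookNum_eq_zero_of_lt c₂ hlt])
    · exact rookNum_self_ne_zero (hc₂.lt_apply_of_pos hpos₂)
        (by rw [← h, rookNum_eq_zero_of_lt c₁ hlt])
  have hroots := rootMultiset_eq_of_rookEquiv hc₁.monotone hc₂.monotone h
  have hrootVec := hc₁.antitone_rootVec.eq_of_map_univ_eq hc₂.antitone_rootVec hroots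
  obtain rfl : c₁ = c₂ := funext fun j => by
    have := congrFun hrootVec j
    simp only [rootVec] at this
    omega
  rfl

end StrictBoards

section Existence

variable {n : ℕ}

theorem Monotone.rootVec_succ_le {b : Fin (n + 1) → ℕ} (hb : Monotone b) (i : Fin n) :
    rootVec b i.succ ≤ rootVec b i.castSucc + 1 := by
  have := hb i.castSucc_lt_succ.le
  simp only [rootVec, Fin.val_succ, Fin.val_castSucc]
  omega

theorem Monotone.exists_rootVec_eq {b : Fin n → ℕ} (hb : Monotone b) {t : ℤ} (ht : 0 ≤ t)
    {i : Fin n} (hi : t ≤ rootVec b i) : ∃ j, rootVec b j = t := by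
  cases n with
  | zero => exact i.elim0
  | succ n =>
    induction i using Fin.induction with
    | zero =>
      have : rootVec b 0 ≤ 0 := by simp [rootVec]
      exact ⟨0, by omega⟩
    | succ i ih =>
      by_cases hcast : t ≤ rootVec b i.castSucc
      · exact ih hcast
      · exact ⟨i.succ, by have := hb.rootVec_succ_le i; omega⟩

theorem Monotone.map_range_le_rootMultiset {b : Fin n → ℕ} (hb : Monotone b) {m : ℕ}
    (hm : ∀ t < m, ∃ i, (t : ℤ) ≤ rootVec b i) :
    (Multiset.range m).map (Nat.cast : ℕ → ℤ) ≤ rootMultiset b := by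
  refine (Multiset.le_iff_subset ((Multiset.nodup_range m).map Nat.cast_injective)).2 ?_
  intro x hx
  obtain ⟨t, ht, rfl⟩ := Multiset.mem_map.1 hx
  obtain ⟨i, hi⟩ := hm t (Multiset.mem_range.1 ht)
  obtain ⟨j, hj⟩ := hb.exists_rootVec_eq (Nat.cast_nonneg t) hi
  exact Multiset.mem_map.2 ⟨j, mem_univ_val j, hj⟩

theorem rootMultiset_append_zero {m : ℕ} (c : Fin n → ℕ) :
    rootMultiset (Fin.append (0 : Fin m → ℕ) c) =
      (Multiset.range m).map (Nat.cast : ℕ → ℤ) + univ.val.map fun j => (m : ℤ) + rootVec c j := by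
  have : rootVec (Fin.append (0 : Fin m → ℕ) c) =
      Fin.append (fun i : Fin m => ((i : ℕ) : ℤ)) fun j => (m : ℤ) + rootVec c j := by
    funext i
    induction i using Fin.addCases with
    | left i => simp [rootVec]
    | right j =>
      simp only [rootVec, Fin.val_natAdd, Nat.cast_add, Fin.append_right]
      ring
  rw [rootMultiset, this, Fin.univ_val_map, List.ofFn_fin_append, ← Multiset.coe_add,
    ← Fin.univ_val_map, List.ofFn_eq_map, Multiset.range, ← List.map_coe_finRange_eq_range,
    Multiset.map_coe, List.map_map]
  rfl

theorem Monotone.append_zero {m : ℕ} {c : Fin n → ℕ} (hc : Monotone c) :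
    Monotone (Fin.append (0 : Fin m → ℕ) c) := by
  intro i j hij
  induction i using Fin.addCases with
  | left i => simp
  | right i =>
    induction j using Fin.addCases with
    | left j =>
      simp only [Fin.le_def, Fin.val_natAdd, Fin.val_castAdd] at hij
      omega
    | right j => simpa using hc (show i ≤ j by simpa using hij)

theorem Antitone.exists_strictMono_rootVec_eq {k : ℕ} {w : Fin k → ℤ} (hw : Antitone w) {m : ℕ}
    (hlt : ∀ j, w j < m) :
    ∃ c : Fin k → ℕ, StrictMono c ∧ (∀ j, 0 < c j) ∧ ∀ j, (m : ℤ) + rootVec c j = w j := by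
  refine ⟨fun j => ((j : ℤ) + m - w j).toNat, fun i j hij => ?_, fun j => ?_, fun j => ?_⟩
  · have := hw hij.le
    have : (i : ℕ) < j := hij
    have := hlt i
    have := hlt j
    dsimp only
    omega
  · have := hlt j
    dsimp only
    omega
  · have := hlt j
    simp only [rootVec]
    omega

theorem Monotone.exists_strictMono_rookEquiv {b : Fin n → ℕ} (hb : Monotone b) :
    ∃ k, ∃ c : Fin k → ℕ, StrictMono c ∧ (∀ i, 0 < c i) ∧ RookEquiv c b := by
  classical
  have hbound : ∃ m : ℕ, ∀ i, rootVec b i < m := ⟨n, fun i => by simp only [rootVec]; omega⟩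
  set m := Nat.find hbound
  have hrange : (Multiset.range m).map (Nat.cast : ℕ → ℤ) ≤ rootMultiset b :=
    hb.map_range_le_rootMultiset fun t ht => by simpa using Nat.find_min hbound ht
  obtain ⟨k, w, hw, hwroots⟩ :=
    (rootMultiset b - (Multiset.range m).map (Nat.cast : ℕ → ℤ)).exists_antitone_map_univ_eq
  have hw_lt : ∀ j, w j < m := fun j => by
    have hmem := Multiset.mem_map_of_mem w (mem_univ_val j)
    rw [hwroots] at hmem
    obtain ⟨i, -, hi⟩ := Multiset.mem_map.1 (Multiset.mem_of_le tsub_le_self hmem)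
    exact hi ▸ Nat.find_spec hbound i
  obtain ⟨c, hc, hpos, hroots⟩ := hw.exists_strictMono_rootVec_eq hw_lt
  refine ⟨k, c, hc, hpos, fun l => ?_⟩
  rw [← rookNum_append_zero (m := m) c]
  refine rookEquiv_of_rootMultiset_eq hc.monotone.append_zero hb ?_ l
  rw [rootMultiset_append_zero, funext hroots, hwroots, add_tsub_cancel_of_le hrange]

end Existence

/-- Foata–Schützenberger: every Ferrers board is rook equivalent to
a unique Ferrers board with strictly increasing positive column heights. -/
theorem stmt15 {n : ℕ} (b : Fin n → ℕ) (hb : Monotone b) :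
    ∃! p : (k : ℕ) × (Fin k → ℕ),
      StrictMono p.2 ∧ (∀ i, 0 < p.2 i) ∧ RookEquiv p.2 b := by
  obtain ⟨k, c, hc, hpos, hequiv⟩ := hb.exists_strictMono_rookEquiv
  refine ⟨⟨k, c⟩, ⟨hc, hpos, hequiv⟩, ?_⟩
  rintro ⟨k', c'⟩ ⟨hc', hpos', hequiv'⟩
  exact sigma_eq_of_rookEquiv hc' hpos' hc hpos fun j => (hequiv' j).trans (hequiv j).symm
end

section
/- (Briggs–Remmel factorization) Fix a positive integer m. If B = (b_1,…,b_n) is a singleton board with n columns, then, as polynomials in x (equivalently, for every integer x), ∑_{k=0}^{n} r_{k,m}(B) · x↓_{n−k,m} = ∏_{i=1}^{n} (x + b_i − m(i−1)), where x↓_{j,m} = ∏_{i=0}^{j−1}(x − im) is the j-th m-falling factorial (with x↓_{0,m} = 1). -/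
/-- An `m`-level rook placement on the board with column heights `b`:
a set of cells (column, row) inside the board, no two sharing a column or a level.
Cells are 0-indexed: cell `(i, j)` lies in the board iff `j < b i`, and the level
of row `j` is `j / m`. -/
def IsMLevelPlacement {n : ℕ} (m : ℕ) (b : Fin n → ℕ) (P : Finset (Fin n × ℕ)) : Prop :=
  (∀ c ∈ P, c.2 < b c.1) ∧
  ∀ c ∈ P, ∀ d ∈ P, c ≠ d → c.1 ≠ d.1 ∧ c.2 / m ≠ d.2 / m

/-- The `k`-th `m`-level rook number of the board `b`. -/
noncomputable def mRookNum {n : ℕ} (m : ℕ) (b : Fin n → ℕ) (k : ℕ) : ℕ :=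
  Set.ncard {P : Finset (Fin n × ℕ) | IsMLevelPlacement m b P ∧ P.card = k}

/-- Two boards are `m`-level rook equivalent if all their `m`-level rook numbers agree. -/
def MRookEquiv {n₁ n₂ : ℕ} (m : ℕ) (b₁ : Fin n₁ → ℕ) (b₂ : Fin n₂ → ℕ) : Prop :=
  ∀ k, mRookNum m b₁ k = mRookNum m b₂ k

/-- The `m`-floor of a natural number: the largest multiple of `m` that is `≤ o`. -/
def mFloor (m o : ℕ) : ℕ := m * (o / m)

/-- The `m`-floor of an integer: the largest multiple of `m` that is `≤ o`. -/
def mFloorZ (m : ℕ) (o : ℤ) : ℤ := o - o % (m : ℤ)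

/-- A singleton board: a Ferrers board (weakly increasing column heights) such that
whenever a column height `b i` is not a multiple of `m`, the `m`-floor of the next
column height is strictly larger. -/
def IsSingletonBoard {n : ℕ} (m : ℕ) (b : Fin n → ℕ) : Prop :=
  Monotone b ∧ ∀ i j : Fin n, (j : ℕ) = (i : ℕ) + 1 → ¬ (m ∣ b i) →
    mFloor m (b i) < mFloor m (b j)

/-- The `m`-level root vector of a board: the (0-indexed) `i`-th entry is
`m * i - b i` (1-indexed: `m(i-1) - b_i`). -/
def mRootVec {n : ℕ} (m : ℕ) (b : Fin n → ℕ) : Fin n → ℤ :=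
  fun i => (m : ℤ) * (i : ℤ) - (b i : ℤ)

/-- A singleton board with `n` columns (for the fixed level size `m`). -/
def SingletonBoard (m n : ℕ) : Type := {b : Fin n → ℕ // IsSingletonBoard m b}

/-- The `m`-level rook equivalence graph of the equivalence class of `B`: vertices
are the singleton boards with `n` columns `m`-level rook equivalent to `B`; two
distinct boards are adjacent when one is obtained from the other by moving squares
out of one column into a single other column. -/
def mRookEquivGraph {n : ℕ} (m : ℕ) (B : SingletonBoard m n) :
    SimpleGraph {C : SingletonBoard m n // MRookEquiv m C.1 B.1} :=
  SimpleGraph.fromRel fun C D => MovesSquares C.1.1 D.1.1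

/-- `mEntryCount m b k` is `v_k`, the number of entries of the `m`-level root
vector of `b` equal to `k`. -/
def mEntryCount {n : ℕ} (m : ℕ) (b : Fin n → ℕ) (k : ℕ) : ℕ :=
  (Finset.univ.filter fun l => mRootVec m b l = (k : ℤ)).card

/-- The `j`-th `m`-falling factorial `x↓_{j,m} = ∏_{i=0}^{j-1} (x - im)`,
with `x↓_{0,m} = 1`. -/
def mFallFact (m : ℕ) (x : ℤ) (j : ℕ) : ℤ := ∏ i ∈ Finset.range j, (x - (i : ℤ) * m)

/-!
Induct on the number of columns by removing the last one. A placement of `k + 1` rooks on `B`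
either avoids the last column, or is a placement of `k` rooks on the first `n` columns plus one
rook in a row of the last column whose level none of those `k` rooks occupies. On a singleton
board every level met by a rook in an earlier column lies entirely below the top `b_n` of the
last column, so exactly `b_n - k m` rows remain free, giving
`r_{k+1}(B) = r_{k+1}(B') + (b_n - k m) r_k(B')`. With `x↓_{j+1,m} = x↓_{j,m} (x - j m)` this
recurrence turns the sum for `B` into `(x + b_n - m n)` times the sum for `B'`.
-/

open Finset

namespace IsMLevelPlacement

variable {m n : ℕ} {b : Fin n → ℕ} {P Q : Finset (Fin n × ℕ)}

lemma mono (hP : IsMLevelPlacement m b P) (hQ : Q ⊆ P) : IsMLevelPlacement m b Q :=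
  ⟨fun c hc => hP.1 c (hQ hc), fun c hc d hd hcd => hP.2 c (hQ hc) d (hQ hd) hcd⟩

lemma empty : IsMLevelPlacement m b ∅ := by
  simp [IsMLevelPlacement]

lemma card_le (hP : IsMLevelPlacement m b P) : #P ≤ n := by
  simpa using card_le_card_of_injOn Prod.fst (t := univ) (fun _ _ => mem_univ _)
    fun c hc d hd hcd => by_contra fun hne => (hP.2 c hc d hd hne).1 hcd

lemma injOn_level (hP : IsMLevelPlacement m b P) : Set.InjOn (fun c : Fin n × ℕ => c.2 / m) P :=
  fun c hc d hd hcd => by_contra fun hne => (hP.2 c hc d hd hne).2 hcd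

end IsMLevelPlacement

lemma isMLevelPlacement_insert {m n : ℕ} {b : Fin n → ℕ} {P : Finset (Fin n × ℕ)}
    {c : Fin n × ℕ} (hc : c ∉ P) :
    IsMLevelPlacement m b (insert c P) ↔
      IsMLevelPlacement m b P ∧ c.2 < b c.1 ∧ ∀ d ∈ P, c.1 ≠ d.1 ∧ c.2 / m ≠ d.2 / m := by
  have hne : ∀ d ∈ P, c ≠ d := fun d hd h => hc (h ▸ hd)
  simp only [IsMLevelPlacement, forall_mem_insert]
  constructor
  · rintro ⟨⟨hcb, hPb⟩, ⟨-, hcP⟩, hP⟩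
    exact ⟨⟨hPb, fun d hd => (hP d hd).2⟩, hcb, fun d hd => hcP d hd (hne d hd)⟩
  · rintro ⟨⟨hPb, hP⟩, hcb, hcP⟩
    exact ⟨⟨hcb, hPb⟩, ⟨fun h => absurd rfl h, fun d hd _ => hcP d hd⟩,
      fun d hd => ⟨fun _ => ⟨(hcP d hd).1.symm, (hcP d hd).2.symm⟩, hP d hd⟩⟩

open scoped Classical in
noncomputable def mLevelPlacements {n : ℕ} (m : ℕ) (b : Fin n → ℕ) (k : ℕ) :
    Finset (Finset (Fin n × ℕ)) :=
  {P ∈ (univ ×ˢ range (univ.sup b)).powerset | IsMLevelPlacement m b P ∧ #P = k}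

section RookNumbers

variable {m n : ℕ} {b : Fin n → ℕ} {k : ℕ}

lemma mem_mLevelPlacements {P : Finset (Fin n × ℕ)} :
    P ∈ mLevelPlacements m b k ↔ IsMLevelPlacement m b P ∧ #P = k := by
  classical
  simp only [mLevelPlacements, mem_filter, mem_powerset, and_iff_right_iff_imp]
  intro hP c hc
  simpa using (hP.1.1 c hc).trans_le (le_sup (mem_univ c.1))

lemma mRookNum_eq_card : mRookNum m b k = #(mLevelPlacements m b k) := by
  rw [mRookNum, ← Set.ncard_coe_finset]
  congr 1
  ext P
  simp [mem_mLevelPlacements]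

lemma mRookNum_zero : mRookNum m b 0 = 1 := by
  rw [mRookNum_eq_card, card_eq_one]
  exact ⟨∅, eq_singleton_iff_unique_mem.2
    ⟨mem_mLevelPlacements.2 ⟨.empty, rfl⟩, fun P hP => card_eq_zero.1 (mem_mLevelPlacements.1 hP).2⟩⟩

lemma mRookNum_eq_zero (hk : n < k) : mRookNum m b k = 0 := by
  rw [mRookNum_eq_card, card_eq_zero, eq_empty_iff_forall_notMem]
  intro P hPk
  obtain ⟨hP, rfl⟩ := mem_mLevelPlacements.1 hPk
  exact hk.not_ge hP.card_le

end RookNumbers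

def castSuccCell (n : ℕ) : Fin n × ℕ ↪ Fin (n + 1) × ℕ :=
  Fin.castSuccEmb.prodMap (Function.Embedding.refl ℕ)

def freeRows {n : ℕ} (m N : ℕ) (P : Finset (Fin n × ℕ)) : Finset ℕ :=
  {j ∈ range N | ∀ c ∈ P, j / m ≠ c.2 / m}

section LastColumn

variable {m n : ℕ} {b : Fin (n + 1) → ℕ}

@[simp]
lemma castSuccCell_apply (c : Fin n × ℕ) : castSuccCell n c = (c.1.castSucc, c.2) := rfl

lemma fst_ne_last_of_mem_map_castSuccCell {P : Finset (Fin n × ℕ)} {c : Fin (n + 1) × ℕ}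
    (hc : c ∈ P.map (castSuccCell n)) : c.1 ≠ Fin.last n := by
  obtain ⟨c₀, -, rfl⟩ := mem_map.1 hc
  exact (Fin.castSucc_lt_last c₀.1).ne

lemma last_notMem_map_castSuccCell (P : Finset (Fin n × ℕ)) (j : ℕ) :
    (Fin.last n, j) ∉ P.map (castSuccCell n) :=
  fun h => fst_ne_last_of_mem_map_castSuccCell h rfl

lemma exists_map_castSuccCell_eq {P : Finset (Fin (n + 1) × ℕ)}
    (h : ∀ c ∈ P, c.1 ≠ Fin.last n) : ∃ P₀ : Finset (Fin n × ℕ), P₀.map (castSuccCell n) = P := by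
  classical
  refine ⟨P.preimage (castSuccCell n) (castSuccCell n).injective.injOn, ?_⟩
  rw [map_eq_image, image_preimage, filter_true_of_mem]
  intro c hc
  obtain ⟨i, hi⟩ := Fin.exists_castSucc_eq.2 (h c hc)
  exact ⟨(i, c.2), Prod.ext hi rfl⟩

lemma insert_last_map_castSuccCell_inj {P P' : Finset (Fin n × ℕ)} {j j' : ℕ} :
    insert (Fin.last n, j) (P.map (castSuccCell n)) =
        insert (Fin.last n, j') (P'.map (castSuccCell n)) ↔ j = j' ∧ P = P' := by
  refine ⟨fun h => ?_, by rintro ⟨rfl, rfl⟩; rfl⟩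
  obtain rfl : j = j' := by
    have hmem := h ▸ mem_insert_self (Fin.last n, j) (P.map (castSuccCell n))
    rcases mem_insert.1 hmem with hj | hj
    · exact (Prod.ext_iff.1 hj).2
    · exact absurd hj (last_notMem_map_castSuccCell P' j)
  refine ⟨rfl, map_injective (castSuccCell n) ?_⟩
  simpa [erase_insert (last_notMem_map_castSuccCell _ j)] using
    congrArg (·.erase (Fin.last n, j)) h

lemma isMLevelPlacement_map_castSuccCell_iff {P : Finset (Fin n × ℕ)} :
    IsMLevelPlacement m b (P.map (castSuccCell n)) ↔ IsMLevelPlacement m (Fin.init b) P := by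
  simp only [IsMLevelPlacement, forall_mem_map, castSuccCell_apply, ne_eq, Prod.ext_iff,
    Fin.castSucc_inj, Fin.init]

lemma filter_mLevelPlacements_avoiding_last (k : ℕ) :
    {P ∈ mLevelPlacements m b k | ∀ c ∈ P, c.1 ≠ Fin.last n} =
      (mLevelPlacements m (Fin.init b) k).map (mapEmbedding (castSuccCell n)).toEmbedding := by
  ext P
  simp only [mem_filter, mem_map, mem_mLevelPlacements, RelEmbedding.coe_toEmbedding,
    mapEmbedding_apply]
  constructor
  · rintro ⟨⟨hP, rfl⟩, hlast⟩
    obtain ⟨P₀, rfl⟩ := exists_map_castSuccCell_eq hlast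
    exact ⟨P₀, ⟨isMLevelPlacement_map_castSuccCell_iff.1 hP, (card_map _).symm⟩, rfl⟩
  · rintro ⟨P₀, ⟨hP₀, rfl⟩, rfl⟩
    exact ⟨⟨isMLevelPlacement_map_castSuccCell_iff.2 hP₀, card_map _⟩,
      fun c hc => fst_ne_last_of_mem_map_castSuccCell hc⟩

lemma card_filter_mLevelPlacements_touching_last (k : ℕ) :
    #{P ∈ mLevelPlacements m b (k + 1) | ∃ c ∈ P, c.1 = Fin.last n} =
      ∑ P ∈ mLevelPlacements m (Fin.init b) k, #(freeRows m (b (Fin.last n)) P) := by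
  rw [← card_sigma]
  symm
  refine card_bij (fun x _ => insert (Fin.last n, x.2) (x.1.map (castSuccCell n))) ?_ ?_ ?_
  · rintro ⟨P₀, j⟩ hx
    obtain ⟨hmem, hj⟩ := mem_sigma.1 hx
    obtain ⟨hP₀, rfl⟩ := mem_mLevelPlacements.1 hmem
    obtain ⟨hjN, hjfree⟩ := mem_filter.1 hj
    have hnew := last_notMem_map_castSuccCell P₀ j
    refine mem_filter.2 ⟨mem_mLevelPlacements.2 ⟨(isMLevelPlacement_insert hnew).2
      ⟨isMLevelPlacement_map_castSuccCell_iff.2 hP₀, mem_range.1 hjN, ?_⟩, ?_⟩,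
      _, mem_insert_self _ _, rfl⟩
    · simp only [forall_mem_map, castSuccCell_apply]
      exact fun d hd => ⟨(Fin.castSucc_lt_last _).ne', hjfree d hd⟩
    · rw [card_insert_of_notMem hnew, card_map]
  · rintro ⟨P, j⟩ - ⟨P', j'⟩ - h
    obtain ⟨rfl, rfl⟩ := insert_last_map_castSuccCell_inj.1 h
    rfl
  · intro P hP
    obtain ⟨hP, c, hc, hclast⟩ := mem_filter.1 hP
    obtain ⟨hP, hcard⟩ := mem_mLevelPlacements.1 hP
    have hrest : ∀ d ∈ P.erase c, d.1 ≠ Fin.last n := fun d hd hdlast =>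
      (hP.2 c hc d (mem_of_mem_erase hd) (ne_of_mem_erase hd).symm).1 (hclast.trans hdlast.symm)
    obtain ⟨P₀, hP₀⟩ := exists_map_castSuccCell_eq hrest
    refine ⟨⟨P₀, c.2⟩, mem_sigma.2 ⟨mem_mLevelPlacements.2 ⟨?_, ?_⟩, mem_filter.2 ⟨?_, ?_⟩⟩, ?_⟩
    · rw [← isMLevelPlacement_map_castSuccCell_iff, hP₀]
      exact hP.mono (erase_subset c P)
    · rw [← card_map (castSuccCell n), hP₀, card_erase_of_mem hc, hcard, Nat.add_sub_cancel]
    · rw [mem_range, ← hclast]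
      exact hP.1 c hc
    · intro d hd
      have hdP : castSuccCell n d ∈ P.erase c := hP₀ ▸ mem_map_of_mem _ hd
      exact (hP.2 c hc _ (mem_of_mem_erase hdP) (ne_of_mem_erase hdP).symm).2
    · have hc' : (Fin.last n, c.2) = c := Prod.ext hclast.symm rfl
      simp only [hP₀, hc', insert_erase hc]

lemma card_mLevelPlacements_succ (k : ℕ) :
    #(mLevelPlacements m b (k + 1)) = #(mLevelPlacements m (Fin.init b) (k + 1)) +
      ∑ P ∈ mLevelPlacements m (Fin.init b) k, #(freeRows m (b (Fin.last n)) P) := by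
  have hsplit := card_filter_add_card_filter_not (s := mLevelPlacements m b (k + 1))
    (fun P => ∃ c ∈ P, c.1 = Fin.last n)
  have havoid : {P ∈ mLevelPlacements m b (k + 1) | ¬∃ c ∈ P, c.1 = Fin.last n} =
      {P ∈ mLevelPlacements m b (k + 1) | ∀ c ∈ P, c.1 ≠ Fin.last n} :=
    filter_congr fun _ _ => by simp only [not_exists, not_and, ne_eq]
  rw [havoid, filter_mLevelPlacements_avoiding_last, card_map,
    card_filter_mLevelPlacements_touching_last] at hsplit
  omega

end LastColumn

lemma card_filter_range_div_eq {m N ℓ : ℕ} (hm : 0 < m) (hℓ : m * ℓ + m ≤ N) :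
    #{j ∈ range N | j / m = ℓ} = m := by
  suffices {j ∈ range N | j / m = ℓ} = Ico (m * ℓ) (m * ℓ + m) by simp [this]
  ext j
  simp only [mem_filter, mem_range, mem_Ico]
  have := Nat.div_add_mod j m
  have := Nat.mod_lt j hm
  constructor
  · rintro ⟨-, rfl⟩
    omega
  · rintro ⟨hlo, hhi⟩
    refine ⟨by omega, le_antisymm ?_ ?_⟩
    · exact Nat.lt_succ_iff.1 ((Nat.div_lt_iff_lt_mul hm).2 (by linarith))
    · exact (Nat.le_div_iff_mul_le hm).2 (by linarith)

lemma card_freeRows {m n N : ℕ} (hm : 0 < m) {P : Finset (Fin n × ℕ)}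
    (hinj : Set.InjOn (fun c : Fin n × ℕ => c.2 / m) P)
    (hN : ∀ c ∈ P, m * (c.2 / m) + m ≤ N) :
    (#(freeRows m N P) : ℤ) = N - #P * m := by
  set L := P.image fun c => c.2 / m
  have hfree : freeRows m N P = {j ∈ range N | j / m ∉ L} := by
    ext j
    simp [freeRows, L, eq_comm]
  have hfiber : ∀ ℓ ∈ L, #{j ∈ {j ∈ range N | j / m ∈ L} | j / m = ℓ} = m := by
    intro ℓ hℓ
    obtain ⟨c, hc, rfl⟩ := mem_image.1 hℓ
    refine Eq.trans (congrArg card ?_) (card_filter_range_div_eq hm (hN c hc))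
    rw [filter_filter]
    exact filter_congr fun j _ => ⟨fun h => h.2, fun h => ⟨h ▸ hℓ, h⟩⟩
  have hblocked : #{j ∈ range N | j / m ∈ L} = #P * m := by
    rw [card_eq_sum_card_fiberwise (s := {j ∈ range N | j / m ∈ L}) (f := (· / m)) (t := L)
        fun j hj => (mem_filter.1 hj).2,
      sum_congr rfl hfiber, sum_const, smul_eq_mul, card_image_of_injOn hinj]
  have hsplit := card_filter_add_card_filter_not (s := range N) (· / m ∈ L)
  rw [card_range, hblocked, ← hfree] at hsplit
  omega

namespace IsSingletonBoard

variable {m n : ℕ}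

lemma level_add_le {b : Fin n → ℕ} (hb : IsSingletonBoard m b) {i j : Fin n} (hij : i < j)
    {r : ℕ} (hr : r < b i) : m * (r / m) + m ≤ b j := by
  let i' : Fin n := ⟨i + 1, lt_of_le_of_lt hij j.isLt⟩
  by_cases hdvd : m ∣ b i
  · obtain ⟨t, ht⟩ := hdvd
    have hrt : r / m < t := Nat.div_lt_of_lt_mul (ht ▸ hr)
    calc m * (r / m) + m = m * (r / m + 1) := by ring
      _ ≤ m * t := Nat.mul_le_mul_left m hrt
      _ = b i := ht.symm
      _ ≤ b j := hb.1 hij.le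
  · have hfloor : b i / m < b i' / m := Nat.lt_of_mul_lt_mul_left (hb.2 i i' rfl hdvd)
    calc m * (r / m) + m = m * (r / m + 1) := by ring
      _ ≤ m * (b i' / m) :=
        Nat.mul_le_mul_left m ((Nat.div_le_div_right hr.le).trans_lt hfloor)
      _ ≤ b i' := Nat.mul_div_le _ _
      _ ≤ b j := hb.1 (Fin.mk_le_of_le_val hij)

lemma init {b : Fin (n + 1) → ℕ} (hb : IsSingletonBoard m b) :
    IsSingletonBoard m (Fin.init b) :=
  ⟨fun _ _ hij => hb.1 (Fin.castSucc_le_castSucc_iff.2 hij), fun _ _ hij => hb.2 _ _ hij⟩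

lemma mRookNum_succ (hm : 0 < m) {b : Fin (n + 1) → ℕ} (hb : IsSingletonBoard m b) (k : ℕ) :
    (mRookNum m b (k + 1) : ℤ) = mRookNum m (Fin.init b) (k + 1) +
      (b (Fin.last n) - k * m) * mRookNum m (Fin.init b) k := by
  have hfree : ∀ P ∈ mLevelPlacements m (Fin.init b) k,
      (#(freeRows m (b (Fin.last n)) P) : ℤ) = b (Fin.last n) - k * m := by
    intro P hmem
    obtain ⟨hP, rfl⟩ := mem_mLevelPlacements.1 hmem
    exact card_freeRows hm hP.injOn_level
      fun c hc => hb.level_add_le (Fin.castSucc_lt_last c.1) (hP.1 c hc)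
  simp only [mRookNum_eq_card, card_mLevelPlacements_succ, Nat.cast_add, Nat.cast_sum,
    sum_congr rfl hfree, sum_const, nsmul_eq_mul]
  ring

end IsSingletonBoard

lemma mFallFact_succ (m : ℕ) (x : ℤ) (j : ℕ) :
    mFallFact m x (j + 1) = mFallFact m x j * (x - j * m) :=
  prod_range_succ _ _

lemma sum_mul_mFallFact_of_rec {m n N : ℕ} {x : ℤ} {r r' : ℕ → ℤ} (h0 : r 0 = r' 0)
    (htop : r' (n + 1) = 0) (hrec : ∀ k, r (k + 1) = r' (k + 1) + (N - k * m) * r' k) :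
    ∑ k ∈ range (n + 2), r k * mFallFact m x (n + 1 - k) =
      (x + N - m * n) * ∑ k ∈ range (n + 1), r' k * mFallFact m x (n - k) := by
  have hshift : ∑ k ∈ range (n + 1), r' (k + 1) * mFallFact m x (n - k) +
      r' 0 * mFallFact m x (n + 1) = ∑ k ∈ range (n + 1), r' k * mFallFact m x (n + 1 - k) := by
    have h := sum_range_succ' (fun k => r' k * mFallFact m x (n + 1 - k)) (n + 1)
    rw [sum_range_succ, htop, zero_mul, add_zero] at h
    simpa using h.symm
  rw [sum_range_succ', h0]
  simp only [hrec, Nat.add_sub_add_right, Nat.sub_zero, add_mul, sum_add_distrib]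
  rw [add_right_comm, hshift, ← sum_add_distrib, mul_sum]
  refine sum_congr rfl fun k hk => ?_
  have hkn : k ≤ n := Nat.lt_succ_iff.1 (mem_range.1 hk)
  rw [Nat.sub_add_comm hkn, mFallFact_succ, Nat.cast_sub hkn]
  ring

/-- Briggs–Remmel factorization: for a singleton board
`b = (b_1,…,b_n)` and every integer `x`,
`∑_{k=0}^n r_{k,m}(B) x↓_{n-k,m} = ∏_{i=1}^n (x + b_i - m(i-1))`. -/
theorem stmt18 (m : ℕ) (hm : 0 < m) {n : ℕ} (b : Fin n → ℕ)
    (hb : IsSingletonBoard m b) :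
    ∀ x : ℤ, ∑ k ∈ Finset.range (n + 1), (mRookNum m b k : ℤ) * mFallFact m x (n - k) =
      ∏ i : Fin n, (x + (b i : ℤ) - (m : ℤ) * (i : ℤ)) := by
  induction n with
  | zero => simp [mRookNum_zero, mFallFact]
  | succ n ih =>
    intro x
    rw [sum_mul_mFallFact_of_rec (N := b (Fin.last n)) (r' := fun k => mRookNum m (Fin.init b) k)
      (by simp [mRookNum_zero]) (by simp [mRookNum_eq_zero]) (hb.mRookNum_succ hm),
      ih _ hb.init x, Fin.prod_univ_castSucc]
    simp only [Fin.init, Fin.val_castSucc, Fin.val_last]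
    ring
end

section
/- (Barrese–Loehr–Remmel–Sagan) Fix a positive integer m. A vector ξ = ⟨ξ_1, ξ_2, …, ξ_n⟩ of integers is the m-level root vector of some singleton board with n columns if and only if (i) ξ_1 ≤ 0, (ii) ξ_i + m ≥ ξ_{i+1} for all 1 ≤ i < n, and (iii) whenever neither ξ_i nor ξ_{i+1} is a multiple of m, ⌊ξ_i⌋_m ≥ ⌊ξ_{i+1}⌋_m. -/
section MFloor

variable {m : ℕ}

lemma mFloorZ_eq_mul_ediv (x : ℤ) : mFloorZ m x = m * (x / m) := by
  rw [mFloorZ, Int.emod_def, sub_sub_cancel]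

lemma natCast_mFloor (o : ℕ) : (mFloor m o : ℤ) = mFloorZ m o := by
  rw [mFloorZ_eq_mul_ediv, mFloor]
  push_cast
  rfl

lemma dvd_mFloorZ (x : ℤ) : (m : ℤ) ∣ mFloorZ m x := by
  rw [mFloorZ_eq_mul_ediv]
  exact dvd_mul_right _ _

lemma mFloorZ_eq_self_of_dvd {x : ℤ} (hx : (m : ℤ) ∣ x) : mFloorZ m x = x := by
  rw [mFloorZ, Int.emod_eq_zero_of_dvd hx, sub_zero]

lemma mFloorZ_lt_self (hm : 0 < m) {x : ℤ} (hx : ¬ (m : ℤ) ∣ x) : mFloorZ m x < x := by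
  have := (Int.emod_pos_of_not_dvd hx).resolve_left (by omega)
  rw [mFloorZ]
  omega

lemma mFloorZ_mul_sub (k : ℤ) {x : ℤ} (hx : ¬ (m : ℤ) ∣ x) :
    mFloorZ m (m * k - x) = m * k - mFloorZ m x - m := by
  simp only [mFloorZ, Int.mul_sub_emod_self_left, Int.neg_emod, hx, if_false, Int.natAbs_natCast]
  ring

lemma lt_iff_add_le_of_dvd (hm : 0 < m) {p q : ℤ} (hp : (m : ℤ) ∣ p) (hq : (m : ℤ) ∣ q) :
    p < q ↔ p + m ≤ q := by
  obtain ⟨a, rfl⟩ := hp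
  obtain ⟨c, rfl⟩ := hq
  have hm' : (0 : ℤ) < m := by exact_mod_cast hm
  constructor
  · intro h
    have : a < c := lt_of_mul_lt_mul_left h hm'.le
    nlinarith
  · intro h
    linarith

lemma mFloorZ_step_iff (hm : 0 < m) {a b : ℤ} (hab : a ≤ b) (k : ℤ) :
    (¬ (m : ℤ) ∣ a → mFloorZ m a < mFloorZ m b) ↔
      (¬ (m : ℤ) ∣ m * k - a → ¬ (m : ℤ) ∣ m * (k + 1) - b →
        mFloorZ m (m * (k + 1) - b) ≤ mFloorZ m (m * k - a)) := by
  rw [dvd_sub_right (dvd_mul_right _ _), dvd_sub_right (dvd_mul_right _ _),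
    lt_iff_add_le_of_dvd hm (dvd_mFloorZ a) (dvd_mFloorZ b)]
  constructor
  · intro h ha hb
    rw [mFloorZ_mul_sub _ ha, mFloorZ_mul_sub _ hb]
    linarith [h ha]
  · intro h ha
    by_cases hb : (m : ℤ) ∣ b
    · rw [← lt_iff_add_le_of_dvd hm (dvd_mFloorZ a) (dvd_mFloorZ b), mFloorZ_eq_self_of_dvd hb]
      exact (mFloorZ_lt_self hm ha).trans_le hab
    · have := h ha hb
      rw [mFloorZ_mul_sub _ ha, mFloorZ_mul_sub _ hb] at this
      linarith

end MFloor

lemma Fin.monotone_of_le_succ {α : Type*} [Preorder α] {n : ℕ} {f : Fin n → α}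
    (h : ∀ i : ℕ, ∀ hi : i + 1 < n, f ⟨i, by omega⟩ ≤ f ⟨i + 1, hi⟩) : Monotone f := by
  rintro ⟨a, ha⟩ ⟨c, hc⟩ (hac : a ≤ c)
  induction c, hac using Nat.le_induction with
  | base => rfl
  | succ c hac ih => exact (ih (by omega)).trans (h c hc)

section RootVec

variable {m n : ℕ}

lemma mRootVec_le_natCast_mul (b : Fin n → ℕ) (i : Fin n) : mRootVec m b i ≤ m * (i : ℤ) := by
  simp [mRootVec]

lemma mRootVec_toNat {ξ : Fin n → ℤ} (hξ : ∀ i, ξ i ≤ m * (i : ℤ)) :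
    mRootVec m (fun i => (m * (i : ℤ) - ξ i).toNat) = ξ := by
  funext i
  simp only [mRootVec]
  rw [Int.toNat_of_nonneg (by linarith [hξ i])]
  ring

lemma le_natCast_mul_of_le_add {ξ : Fin n → ℤ} (h0 : ∀ h : 0 < n, ξ ⟨0, h⟩ ≤ 0)
    (hstep : ∀ i : ℕ, ∀ h : i + 1 < n, ξ ⟨i + 1, h⟩ ≤ ξ ⟨i, by omega⟩ + m) (i : Fin n) :
    ξ i ≤ m * (i : ℤ) := by
  obtain ⟨i, hi⟩ := i
  induction i with
  | zero => simpa using h0 hi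
  | succ i ih =>
    have := hstep i hi
    push_cast
    linarith [ih (by omega)]

variable (m) (b : Fin n → ℕ) {i j : Fin n}

lemma mRootVec_of_eq_succ (hj : (j : ℕ) = i + 1) :
    mRootVec m b j = m * ((i : ℤ) + 1) - b j := by
  simp [mRootVec, hj]

lemma mRootVec_le_add_iff (hj : (j : ℕ) = i + 1) :
    mRootVec m b j ≤ mRootVec m b i + m ↔ b i ≤ b j := by
  rw [mRootVec_of_eq_succ m b hj, mRootVec, mul_add, mul_one]
  omega

lemma mFloor_lt_iff_mFloorZ_mRootVec_le (hm : 0 < m) (hj : (j : ℕ) = i + 1) (hb : b i ≤ b j) :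
    (¬ m ∣ b i → mFloor m (b i) < mFloor m (b j)) ↔
      (¬ (m : ℤ) ∣ mRootVec m b i → ¬ (m : ℤ) ∣ mRootVec m b j →
        mFloorZ m (mRootVec m b j) ≤ mFloorZ m (mRootVec m b i)) := by
  rw [mRootVec_of_eq_succ m b hj, mRootVec, ← Int.natCast_dvd_natCast, ← Int.ofNat_lt,
    natCast_mFloor, natCast_mFloor]
  exact mFloorZ_step_iff hm (by exact_mod_cast hb) _

end RootVec

/-- Barrese–Loehr–Remmel–Sagan: an integer vector `ξ` of length `n`
is the `m`-level root vector of some singleton board with `n` columns if and only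
if (i) `ξ_1 ≤ 0`, (ii) `ξ_i + m ≥ ξ_{i+1}` for all `1 ≤ i < n`, and (iii) whenever
neither `ξ_i` nor `ξ_{i+1}` is a multiple of `m`, `⌊ξ_i⌋_m ≥ ⌊ξ_{i+1}⌋_m`. -/
theorem stmt19 (m : ℕ) (hm : 0 < m) {n : ℕ} (ξ : Fin n → ℤ) :
    (∃ b : Fin n → ℕ, IsSingletonBoard m b ∧ ξ = mRootVec m b) ↔
      ((∀ h : 0 < n, ξ ⟨0, h⟩ ≤ 0) ∧
       (∀ i : ℕ, ∀ h : i + 1 < n, ξ ⟨i + 1, h⟩ ≤ ξ ⟨i, by omega⟩ + m) ∧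
       (∀ i : ℕ, ∀ h : i + 1 < n,
          ¬ ((m : ℤ) ∣ ξ ⟨i, by omega⟩) → ¬ ((m : ℤ) ∣ ξ ⟨i + 1, h⟩) →
          mFloorZ m (ξ ⟨i + 1, h⟩) ≤ mFloorZ m (ξ ⟨i, by omega⟩))) := by
  constructor
  · rintro ⟨b, ⟨hmono, hsing⟩, rfl⟩
    have hle (i : ℕ) (h : i + 1 < n) : b ⟨i, by omega⟩ ≤ b ⟨i + 1, h⟩ :=
      hmono (Fin.mk_le_mk.mpr (by omega))
    refine ⟨fun h => by simpa using mRootVec_le_natCast_mul (m := m) b ⟨0, h⟩,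
      fun i h => (mRootVec_le_add_iff m b rfl).mpr (hle i h), fun i h => ?_⟩
    exact (mFloor_lt_iff_mFloorZ_mRootVec_le m b hm rfl (hle i h)).mp (hsing _ _ rfl)
  · rintro ⟨h0, hstep, hfloor⟩
    obtain ⟨b, rfl⟩ : ∃ b : Fin n → ℕ, ξ = mRootVec m b :=
      ⟨_, (mRootVec_toNat (le_natCast_mul_of_le_add h0 hstep)).symm⟩
    have hle (i : ℕ) (h : i + 1 < n) : b ⟨i, by omega⟩ ≤ b ⟨i + 1, h⟩ :=
      (mRootVec_le_add_iff m b rfl).mp (hstep i h)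
    refine ⟨b, ⟨Fin.monotone_of_le_succ hle, ?_⟩, rfl⟩
    rintro ⟨i, hi⟩ ⟨_, h⟩ rfl
    exact (mFloor_lt_iff_mFloorZ_mRootVec_le m b hm rfl (hle i h)).mpr (hfloor i h)
end
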